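/- Let (W,S) be a Coxeter system and ω a word in S. A subword α ⊆ ω is ω-sorted (i.e., its index set is lexicographically least among index sets of reduced subwords of ω representing the same group element ⟨α⟩) if and only if sort_ω(α) = α, where sort_ω is the ω-sorting algorithm applied to ⟨α⟩. -/

import Mathlib

namespace SortingPaper

variable {B : Type*} {M : CoxeterMatrix B} {W : Type*} [Group W]

/-- The subword of `ω` with index set `A` (0-based indices). -/
def subword (ω : List B) (A : Finset ℕ) : List B :=
  (A.sort (· ≤ ·)).filterMap (fun i => ω[i]?)

/-- Lexicographic comparison of index sets: `A ≤lex C` iff `A = C` or the minimum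
element of the symmetric difference belongs to `A`. -/
def lexLE (A C : Finset ℕ) : Prop :=
  A = C ∨ ∃ k, k ∈ A ∧ k ∉ C ∧ ∀ j < k, (j ∈ A ↔ j ∈ C)

/-- `A` is the index set of an ω-sorted word: the corresponding subword is reduced, and
`A` is lexicographically least among index sets of reduced subwords of `ω` with the
same product in `W`. -/
def IsSorted (cs : CoxeterSystem M W) (ω : List B) (A : Finset ℕ) : Prop :=
  A ⊆ Finset.range ω.length ∧ cs.IsReduced (subword ω A) ∧
  ∀ C ⊆ Finset.range ω.length, cs.IsReduced (subword ω C) →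
    cs.wordProd (subword ω C) = cs.wordProd (subword ω A) → lexLE A C

/-- The ω-sorting algorithm (auxiliary): scan the word, recording positions that are
left descents of the current element. -/
noncomputable def sortAux (cs : CoxeterSystem M W) : List B → ℕ → W → Finset ℕ
  | [], _, _ => ∅
  | s :: rest, i, x =>
    if cs.length (cs.simple s * x) < cs.length x then
      insert i (sortAux cs rest (i + 1) (cs.simple s * x))
    else sortAux cs rest (i + 1) x

/-- The index set produced by the ω-sorting algorithm applied to `u ∈ W`. -/
noncomputable def sortIdx (cs : CoxeterSystem M W) (ω : List B) (u : W) : Finset ℕ :=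
  sortAux cs ω 0 u

end SortingPaper

/-!
Scanning `ω` from the left, the algorithm keeps a position exactly when its letter is a left
descent of the current element. A reduced word cannot begin with a letter that is not a left
descent of its product, so no reduced subword for the same element starts at a skipped position,
and position by position no such subword is lexicographically smaller than the output.
Each kept letter lowers the length by one, so the output is always reduced; and by the exchange
property, if the current element has a reduced expression inside the remaining suffix, so does
its product with a left descent, hence the output represents `u` whenever some reduced subword
does.

The exchange property comes from the standard action of `W` on pairs (reflection, parity): it
shows that the set of reflections in the inversion sequence of a reduced word depends only on
the product of the word.
-/

theorem inv_pow_mul_mul_pow_of_inv_eq {G : Type*} [Group G] {x y : G} (hx : x⁻¹ = x)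
    (hy : y⁻¹ = y) (k n : ℕ) :
    ((x * y) ^ k)⁻¹ * ((y * x) ^ n * y) * (x * y) ^ k = (y * x) ^ (n + 2 * k) * y := by
  have hsemi : SemiconjBy y ((x * y) ^ k) ((y * x) ^ k) :=
    SemiconjBy.pow_right (by simp only [SemiconjBy, mul_assoc]) k
  rw [← inv_pow, mul_inv_rev, hx, hy, mul_assoc, mul_assoc, hsemi.eq, ← mul_assoc, ← mul_assoc,
    ← pow_add, ← pow_add]
  ring_nf

namespace CoxeterSystem

variable {B : Type*} {M : CoxeterMatrix B} {W : Type*} [Group W] (cs : CoxeterSystem M W)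

local prefix:100 "s" => cs.simple
local prefix:100 "π" => cs.wordProd
local prefix:100 "ℓ" => cs.length
local prefix:100 "ris " => cs.rightInvSeq
local prefix:100 "lis " => cs.leftInvSeq

section ReflectionPerm

open scoped Classical

/-- `s i` acts on pairs (reflection, parity) by conjugating the reflection and flipping the parity
exactly at `s i`; along a word, the parity of `t` then counts the occurrences of `t` in the right
inversion sequence (`prod_map_reflectionPerm_apply`). -/
noncomputable def reflectionPerm (i : B) : Equiv.Perm (W × ZMod 2) :=
  Function.Involutive.toPerm (fun p => (s i * p.1 * s i, p.2 + if p.1 = s i then 1 else 0))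
    (by
      rintro ⟨t, ε⟩
      have hconj : s i * t * s i = s i ↔ t = s i := by
        rw [mul_eq_right, mul_eq_one_iff_inv_eq, cs.inv_simple, eq_comm]
      simp only [Prod.mk.injEq, hconj, add_assoc, CharTwo.add_self_eq_zero, add_zero,
        ← mul_assoc, cs.simple_mul_simple_self, one_mul]
      simp [mul_assoc])

theorem reflectionPerm_apply (i : B) (t : W) (ε : ZMod 2) :
    cs.reflectionPerm i (t, ε) = (s i * t * s i, ε + if t = s i then 1 else 0) := rfl

theorem prod_map_reflectionPerm_apply (ω : List B) (t : W) (ε : ZMod 2) :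
    (ω.map cs.reflectionPerm).prod (t, ε) = (π ω * t * (π ω)⁻¹, ε + (ris ω).count t) := by
  induction ω with
  | nil => simp
  | cons i ω ih =>
    have hconj : π ω * t * (π ω)⁻¹ = s i ↔ (π ω)⁻¹ * s i * π ω = t := by
      constructor
      · intro h; rw [← h]; group
      · rintro rfl; group
    rw [List.map_cons, List.prod_cons, Equiv.Perm.mul_apply, ih, reflectionPerm_apply, hconj]
    simp only [rightInvSeq, List.count_cons, beq_iff_eq, wordProd_cons, mul_inv_rev, cs.inv_simple,
      Nat.cast_add, Nat.cast_ite, Nat.cast_one, Nat.cast_zero, add_assoc, mul_assoc]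

theorem wordProd_flatten_replicate (i j : B) (k : ℕ) :
    π (List.replicate k [i, j]).flatten = (s i * s j) ^ k := by
  induction k with
  | zero => simp
  | succ k ih => simp [List.replicate_succ, wordProd_cons, ih, pow_succ', mul_assoc]

theorem rightInvSeq_flatten_replicate (i j : B) (k : ℕ) :
    (ris (List.replicate k [i, j]).flatten : Multiset W) =
      (Multiset.range (2 * k)).map fun b => (s j * s i) ^ b * s j := by
  induction k with
  | zero => simp
  | succ k ih =>
    rw [List.replicate_succ, List.flatten_cons, List.cons_append, List.cons_append, List.nil_append]
    set w := (List.replicate k [i, j]).flatten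
    have hw : π w = (s i * s j) ^ k := cs.wordProd_flatten_replicate i j k
    have hconj := inv_pow_mul_mul_pow_of_inv_eq (cs.inv_simple i) (cs.inv_simple j) k
    have h_even : (π w)⁻¹ * s j * π w = (s j * s i) ^ (2 * k) * s j := by
      simpa [hw] using hconj 0
    have h_odd : (π (j :: w))⁻¹ * s i * π (j :: w) = (s j * s i) ^ (2 * k + 1) * s j := by
      simpa [hw, wordProd_cons, mul_assoc, add_comm] using hconj 1
    simp only [rightInvSeq, ← Multiset.cons_coe, ih, h_odd, h_even,
      show 2 * (k + 1) = 2 * k + 1 + 1 by ring, Multiset.range_succ, Multiset.map_cons]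

theorem isLiftable_reflectionPerm : M.IsLiftable cs.reflectionPerm := by
  intro i j
  set w := (List.replicate (M i j) [i, j]).flatten
  have hprod :
      (w.map cs.reflectionPerm).prod = (cs.reflectionPerm i * cs.reflectionPerm j) ^ M i j := by
    simp [w, List.map_flatten, List.prod_flatten]
  have hw : π w = 1 := by rw [wordProd_flatten_replicate, cs.simple_mul_simple_pow]
  -- the inversion sequence of `w` is `b ↦ (s j * s i) ^ b * s j` on `b < 2 * M i j`, which has
  -- period `M i j`, so every reflection occurs in it an even number of times
  have hcount (t : W) : ((ris w).count t : ZMod 2) = 0 := by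
    rw [← Multiset.coe_count, rightInvSeq_flatten_replicate, two_mul, Multiset.range_add,
      Multiset.map_add, Multiset.map_map]
    have hper : ((fun b => (s j * s i) ^ b * s j) ∘ fun b => M i j + b) =
        fun b => (s j * s i) ^ b * s j := by
      funext b; simp [pow_add]
    rw [hper, Multiset.count_add, Nat.cast_add, CharTwo.add_self_eq_zero]
  ext ⟨t, ε⟩ : 1
  rw [← hprod, prod_map_reflectionPerm_apply, hw, hcount]
  simp

theorem cast_count_rightInvSeq_eq_of_wordProd_eq {ω ω' : List B} (h : π ω = π ω') (t : W) :
    ((ris ω).count t : ZMod 2) = (ris ω').count t := by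
  set φ := cs.lift ⟨cs.reflectionPerm, cs.isLiftable_reflectionPerm⟩
  have hφ (ω : List B) : φ (π ω) = (ω.map cs.reflectionPerm).prod := by
    rw [wordProd, map_list_prod, List.map_map]
    exact congrArg List.prod (List.map_congr_left fun i _ => cs.lift_apply_simple _ i)
  simpa [hφ, prod_map_reflectionPerm_apply] using congrArg (fun w => (φ w (t, 0)).2) h

end ReflectionPerm

variable {cs}

theorem IsReduced.mem_rightInvSeq_iff {ω ω' : List B} (hω : cs.IsReduced ω)
    (hω' : cs.IsReduced ω') (h : π ω = π ω') (t : W) : t ∈ ris ω ↔ t ∈ ris ω' := by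
  classical
  have h₁ := List.nodup_iff_count_le_one.mp hω.nodup_rightInvSeq t
  have h₂ := List.nodup_iff_count_le_one.mp hω'.nodup_rightInvSeq t
  have hmod := (ZMod.natCast_eq_natCast_iff' _ _ 2).mp
    (cs.cast_count_rightInvSeq_eq_of_wordProd_eq h t)
  rw [← List.count_pos_iff, ← List.count_pos_iff]
  omega

theorem IsReduced.mem_leftInvSeq_iff {ω ω' : List B} (hω : cs.IsReduced ω)
    (hω' : cs.IsReduced ω') (h : π ω = π ω') (t : W) : t ∈ lis ω ↔ t ∈ lis ω' := by
  simpa [rightInvSeq_reverse] using hω.reverse.mem_rightInvSeq_iff hω'.reverse (by simp [h]) t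

theorem IsReduced.exists_wordProd_eraseIdx_eq {ω : List B} (hω : cs.IsReduced ω) {i : B}
    (h : cs.IsLeftDescent (π ω) i) : ∃ j < ω.length, π (ω.eraseIdx j) = s i * π ω := by
  obtain ⟨ω', hω', hω'_eq⟩ := cs.exists_isReduced (s i * π ω)
  have hprod : π (i :: ω') = π ω := by
    rw [wordProd_cons, ← hω'_eq, simple_mul_simple_cancel_left]
  have hred : cs.IsReduced (i :: ω') := by
    have := cs.isLeftDescent_iff.mp h
    rw [IsReduced, hprod, List.length_cons, ← hω', ← hω'_eq, this]
  have hmem : s i ∈ lis ω := (hred.mem_leftInvSeq_iff hω hprod _).mp (by simp [leftInvSeq])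
  obtain ⟨j, hj, hje⟩ := List.mem_iff_getElem.mp hmem
  refine ⟨j, by simpa using hj, ?_⟩
  rw [← getD_leftInvSeq_mul_wordProd, List.getD_eq_getElem _ _ hj, hje]

theorem IsReduced.exists_sublist_wordProd_eq {ω : List B} (hω : cs.IsReduced ω) {i : B}
    (h : cs.IsLeftDescent (π ω) i) : ∃ ω', ω'.Sublist ω ∧ cs.IsReduced ω' ∧ π ω' = s i * π ω := by
  obtain ⟨j, hj, hje⟩ := hω.exists_wordProd_eraseIdx_eq h
  refine ⟨ω.eraseIdx j, List.eraseIdx_sublist _ _, ?_, hje⟩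
  have := cs.isLeftDescent_iff.mp h
  rw [IsReduced, hje, List.length_eraseIdx_of_lt hj, ← hω.eq]
  omega

theorem IsReduced.isLeftDescent_wordProd_cons {ω : List B} {i : B} (h : cs.IsReduced (i :: ω)) :
    cs.IsLeftDescent (π (i :: ω)) i := by
  have hlen := h.eq
  rw [wordProd_cons, List.length_cons] at hlen
  have := cs.length_wordProd_le ω
  rw [IsLeftDescent, wordProd_cons, simple_mul_simple_cancel_left, hlen]
  omega

end CoxeterSystem

namespace SortingPaper

variable {B : Type*} {M : CoxeterMatrix B} {W : Type*} [Group W]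

noncomputable def shift (A : Finset ℕ) : Finset ℕ :=
  A.preimage (· + 1) (add_left_injective 1).injOn

@[simp]
theorem mem_shift {A : Finset ℕ} {m : ℕ} : m ∈ shift A ↔ m + 1 ∈ A :=
  Finset.mem_preimage

theorem shift_subset_range {A : Finset ℕ} {n : ℕ} (h : A ⊆ Finset.range (n + 1)) :
    shift A ⊆ Finset.range n := fun m hm => by
  simpa using h (mem_shift.mp hm)

theorem map_add_one_sort (X : Finset ℕ) :
    (X.sort (· ≤ ·)).map (· + 1) = (X.map (addRightEmbedding 1)).sort (· ≤ ·) :=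
  Finset.map_sort (addRightEmbedding 1) X _ _ fun _ _ _ _ => (add_le_add_iff_right 1).symm

theorem sort_eq_of_zero_mem {A : Finset ℕ} (h : 0 ∈ A) :
    A.sort (· ≤ ·) = 0 :: ((shift A).sort (· ≤ ·)).map (· + 1) := by
  rw [map_add_one_sort, ← Finset.sort_insert _ (by simp) (by simp)]
  congr 1
  ext (_ | j) <;> simp [h]

theorem sort_eq_of_zero_not_mem {A : Finset ℕ} (h : 0 ∉ A) :
    A.sort (· ≤ ·) = ((shift A).sort (· ≤ ·)).map (· + 1) := by
  rw [map_add_one_sort]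
  congr 1
  ext (_ | j) <;> simp [h]

theorem subword_nil (A : Finset ℕ) : subword ([] : List B) A = [] := by
  simp [subword]

theorem subword_cons_of_zero_mem (a : B) (ω : List B) {A : Finset ℕ} (h : 0 ∈ A) :
    subword (a :: ω) A = a :: subword ω (shift A) := by
  simp [subword, sort_eq_of_zero_mem h, List.filterMap_map]

theorem subword_cons_of_zero_not_mem (a : B) (ω : List B) {A : Finset ℕ} (h : 0 ∉ A) :
    subword (a :: ω) A = subword ω (shift A) := by
  simp [subword, sort_eq_of_zero_not_mem h, List.filterMap_map]

theorem subword_sublist (ω : List B) (A : Finset ℕ) : (subword ω A).Sublist ω := by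
  induction ω generalizing A with
  | nil => simp [subword_nil]
  | cons a ω ih =>
    by_cases h : 0 ∈ A
    · rw [subword_cons_of_zero_mem a ω h]
      exact (ih _).cons_cons a
    · rw [subword_cons_of_zero_not_mem a ω h]
      exact (ih _).cons a

theorem lexLE_antisymm {A C : Finset ℕ} (h₁ : lexLE A C) (h₂ : lexLE C A) : A = C := by
  rcases h₁ with rfl | ⟨k, hkA, hkC, hk⟩
  · rfl
  rcases h₂ with rfl | ⟨k', hk'C, hk'A, hk'⟩
  · rfl
  rcases lt_trichotomy k k' with h | rfl | h
  · exact absurd ((hk' k h).mpr hkA) hkC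
  · exact absurd hk'C hkC
  · exact absurd ((hk k' h).mpr hk'C) hk'A

theorem lexLE_of_zero_mem_of_zero_not_mem {A C : Finset ℕ} (hA : 0 ∈ A) (hC : 0 ∉ C) :
    lexLE A C :=
  Or.inr ⟨0, hA, hC, by simp⟩

theorem lexLE_of_lexLE_shift {A C : Finset ℕ} (h₀ : 0 ∈ A ↔ 0 ∈ C)
    (h : lexLE (shift A) (shift C)) : lexLE A C := by
  rcases h with h | ⟨k, hkA, hkC, hk⟩
  · left
    ext (_ | j)
    · exact h₀
    · simpa using Finset.ext_iff.mp h j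
  · refine Or.inr ⟨k + 1, mem_shift.mp hkA, mem_shift.not.mp hkC, ?_⟩
    rintro (_ | j) hj
    · exact h₀
    · simpa using hk j (by omega)

section Sorting

open CoxeterSystem

variable (cs : CoxeterSystem M W)

local prefix:100 "s" => cs.simple
local prefix:100 "π" => cs.wordProd
local prefix:100 "ℓ" => cs.length

theorem sortAux_succ (ω : List B) (i : ℕ) (x : W) :
    sortAux cs ω (i + 1) x = (sortAux cs ω i x).image (· + 1) := by
  induction ω generalizing i x with
  | nil => simp [sortAux]
  | cons a ω ih =>
    simp only [sortAux]
    split_ifs <;> simp [ih, Finset.image_insert]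

theorem zero_mem_sortIdx_cons_iff (a : B) (ω : List B) (u : W) :
    0 ∈ sortIdx cs (a :: ω) u ↔ cs.IsLeftDescent u a := by
  rw [sortIdx, sortAux]
  split_ifs with h <;> simpa [sortAux_succ, IsLeftDescent] using h

theorem shift_sortIdx_cons_of_isLeftDescent (a : B) (ω : List B) {u : W}
    (h : cs.IsLeftDescent u a) : shift (sortIdx cs (a :: ω) u) = sortIdx cs ω (s a * u) := by
  rw [sortIdx, sortAux, if_pos (show ℓ (s a * u) < ℓ u from h)]
  ext
  simp [sortAux_succ, sortIdx]

theorem shift_sortIdx_cons_of_not_isLeftDescent (a : B) (ω : List B) {u : W}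
    (h : ¬cs.IsLeftDescent u a) : shift (sortIdx cs (a :: ω) u) = sortIdx cs ω u := by
  rw [sortIdx, sortAux, if_neg (show ¬ℓ (s a * u) < ℓ u from h)]
  ext
  simp [sortAux_succ, sortIdx]

theorem sortIdx_subset_range (ω : List B) (u : W) :
    sortIdx cs ω u ⊆ Finset.range ω.length := by
  induction ω generalizing u with
  | nil => simp [sortIdx, sortAux]
  | cons a ω ih =>
    rintro (_ | j) hj
    · simp
    · have : j ∈ shift (sortIdx cs (a :: ω) u) := mem_shift.mpr hj
      by_cases h : cs.IsLeftDescent u a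
      · rw [shift_sortIdx_cons_of_isLeftDescent cs a ω h] at this
        simpa using ih _ this
      · rw [shift_sortIdx_cons_of_not_isLeftDescent cs a ω h] at this
        simpa using ih _ this

theorem subword_sortIdx_cons_of_isLeftDescent (a : B) (ω : List B) {u : W}
    (h : cs.IsLeftDescent u a) :
    subword (a :: ω) (sortIdx cs (a :: ω) u) = a :: subword ω (sortIdx cs ω (s a * u)) := by
  rw [subword_cons_of_zero_mem a ω ((zero_mem_sortIdx_cons_iff cs a ω u).mpr h),
    shift_sortIdx_cons_of_isLeftDescent cs a ω h]

theorem subword_sortIdx_cons_of_not_isLeftDescent (a : B) (ω : List B) {u : W}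
    (h : ¬cs.IsLeftDescent u a) :
    subword (a :: ω) (sortIdx cs (a :: ω) u) = subword ω (sortIdx cs ω u) := by
  rw [subword_cons_of_zero_not_mem a ω ((zero_mem_sortIdx_cons_iff cs a ω u).not.mpr h),
    shift_sortIdx_cons_of_not_isLeftDescent cs a ω h]

theorem length_subword_sortIdx_add (ω : List B) (u : W) :
    (subword ω (sortIdx cs ω u)).length + ℓ ((π (subword ω (sortIdx cs ω u)))⁻¹ * u) = ℓ u := by
  induction ω generalizing u with
  | nil => simp [sortIdx, sortAux, subword_nil]
  | cons a ω ih =>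
    by_cases h : cs.IsLeftDescent u a
    · have := cs.isLeftDescent_iff.mp h
      rw [subword_sortIdx_cons_of_isLeftDescent cs a ω h, List.length_cons, wordProd_cons,
        mul_inv_rev, cs.inv_simple, mul_assoc]
      have := ih (s a * u)
      omega
    · rw [subword_sortIdx_cons_of_not_isLeftDescent cs a ω h, ih]

theorem isReduced_subword_sortIdx (ω : List B) (u : W) :
    cs.IsReduced (subword ω (sortIdx cs ω u)) := by
  have hlen := length_subword_sortIdx_add cs ω u
  set σ := subword ω (sortIdx cs ω u)
  have hle := cs.length_mul_le (π σ) ((π σ)⁻¹ * u)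
  rw [mul_inv_cancel_left] at hle
  exact le_antisymm (cs.length_wordProd_le σ) (by omega)

theorem wordProd_subword_sortIdx {ω β : List B} (hβ : β.Sublist ω) (hred : cs.IsReduced β) :
    π (subword ω (sortIdx cs ω (π β))) = π β := by
  induction ω generalizing β with
  | nil =>
    obtain rfl := List.sublist_nil.mp hβ
    simp [sortIdx, sortAux, subword_nil]
  | cons a ω ih =>
    cases hβ with
    | cons _ hβ =>
      by_cases h : cs.IsLeftDescent (π β) a
      · obtain ⟨γ, hγ, hγred, hγprod⟩ := hred.exists_sublist_wordProd_eq h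
        rw [subword_sortIdx_cons_of_isLeftDescent cs a ω h, wordProd_cons, ← hγprod,
          ih (hγ.trans hβ) hγred, hγprod, simple_mul_simple_cancel_left]
      · rw [subword_sortIdx_cons_of_not_isLeftDescent cs a ω h, ih hβ hred]
    | @cons_cons β _ _ hβ =>
      have h := hred.isLeftDescent_wordProd_cons
      rw [subword_sortIdx_cons_of_isLeftDescent cs a ω h, wordProd_cons, wordProd_cons,
        simple_mul_simple_cancel_left, ih hβ (by simpa using hred.drop 1)]

theorem lexLE_sortIdx {ω : List B} {D : Finset ℕ} (hD : D ⊆ Finset.range ω.length)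
    (hred : cs.IsReduced (subword ω D)) : lexLE (sortIdx cs ω (π (subword ω D))) D := by
  induction ω generalizing D with
  | nil =>
    obtain rfl : D = ∅ := by simpa using hD
    exact Or.inl rfl
  | cons a ω ih =>
    have hshift := ih (shift_subset_range hD)
    by_cases h₀ : 0 ∈ D
    · rw [subword_cons_of_zero_mem a ω h₀] at hred ⊢
      have h := hred.isLeftDescent_wordProd_cons
      refine lexLE_of_lexLE_shift (by simpa [zero_mem_sortIdx_cons_iff cs, h₀] using h) ?_
      rw [shift_sortIdx_cons_of_isLeftDescent cs a ω h, wordProd_cons,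
        simple_mul_simple_cancel_left]
      exact hshift (by simpa using hred.drop 1)
    · rw [subword_cons_of_zero_not_mem a ω h₀] at hred ⊢
      by_cases h : cs.IsLeftDescent (π (subword ω (shift D))) a
      · exact lexLE_of_zero_mem_of_zero_not_mem ((zero_mem_sortIdx_cons_iff cs a ω _).mpr h) h₀
      · refine lexLE_of_lexLE_shift (by simpa [zero_mem_sortIdx_cons_iff cs, h₀] using h) ?_
        rw [shift_sortIdx_cons_of_not_isLeftDescent cs a ω h]
        exact hshift hred

end Sorting

/-- a subword `α ⊆ ω` is ω-sorted iff `sort_ω(α) = α`. -/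
theorem isSorted_iff_sortIdx_eq (cs : CoxeterSystem M W) (ω : List B)
    (A : Finset ℕ) (hA : A ⊆ Finset.range ω.length) :
    IsSorted cs ω A ↔ sortIdx cs ω (cs.wordProd (subword ω A)) = A := by
  constructor
  · rintro ⟨-, hred, hmin⟩
    have hprod := wordProd_subword_sortIdx cs (subword_sublist ω A) hred
    exact lexLE_antisymm (lexLE_sortIdx cs hA hred)
      (hmin _ (sortIdx_subset_range cs ω _) (isReduced_subword_sortIdx cs ω _) hprod)
  · intro h
    have hred := isReduced_subword_sortIdx cs ω (cs.wordProd (subword ω A))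
    rw [h] at hred
    refine ⟨hA, hred, fun C hC hCred hCprod => ?_⟩
    simpa [hCprod, h] using lexLE_sortIdx cs hC hCred

end SortingPaper
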